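/- For every ε > 0, δ ∈ (0,1], positive integer Δ, and vectors u, v ∈ ℤ^d with ‖u - v‖₁ ≤ Δ such that u - v has at most s nonzero coordinates, if τ ≥ Δ·(1 + log(s/δ)/ε), then the distributions P and Q of u + ξ and v + ξ, where ξ has i.i.d. coordinates from the truncated discrete Laplace distribution DLap_τ(ε/Δ), satisfy (ε, δ)-indistinguishability. -/

import Mathlib

/-! On the event that every coordinate of `w` lies within `τ` of `v`, each factor of the
likelihood ratio `P w / Q w` is at most `exp ((ε / Δ) |uᵢ - vᵢ|)`, so `P ≤ e^ε Q` there.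
Off that event some coordinate with `uᵢ ≠ vᵢ` (there are at most `s`) is farther than `τ`
from `vᵢ`; under `P` this is a one-sided tail of `DLap_τ(ε / Δ)` beyond `τ - Δ`, and shifting
the tail by `τ - Δ` towards the origin bounds its mass by `exp (-(ε / Δ) (τ - Δ)) ≤ δ / s`. -/

noncomputable def prob {Ω : Type*} (P : Ω → ℝ) (W : Set Ω) : ℝ := ∑' ω, W.indicator P ω

def Indist {Ω : Type*} (ε δ : ℝ) (P Q : Ω → ℝ) : Prop :=
  ∀ W : Set Ω, prob P W ≤ Real.exp ε * prob Q W + δ ∧ prob Q W ≤ Real.exp ε * prob P W + δ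

noncomputable def dlapTrunc (a : ℝ) (τ : ℤ) (x : ℤ) : ℝ :=
  if |x| ≤ τ then
    Real.exp (-a * |(x : ℝ)|) / (∑ y ∈ Finset.Icc (-τ) τ, Real.exp (-a * |(y : ℝ)|))
  else 0

noncomputable def dlap (a : ℝ) (x : ℤ) : ℝ :=
  Real.exp (-a * |(x : ℝ)|) * (Real.exp a - 1) / (Real.exp a + 1)

open Function Real

section Prob

variable {Ω : Type*} {P Q : Ω → ℝ}

lemma prob_nonneg (hP0 : 0 ≤ P) (A : Set Ω) : 0 ≤ prob P A :=
  tsum_nonneg fun ω => Set.indicator_nonneg (fun x _ => hP0 x) ω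

lemma prob_univ (P : Ω → ℝ) : prob P Set.univ = ∑' ω, P ω := by
  unfold prob
  rw [Set.indicator_univ]

lemma prob_comp_equiv {α : Type*} (e : α ≃ Ω) (P : Ω → ℝ) (A : Set α) :
    prob (fun x => P (e x)) A = prob P (e.symm ⁻¹' A) := by
  unfold prob
  rw [← e.tsum_eq]
  congr 1
  funext x
  by_cases hx : x ∈ A <;> simp [hx]

lemma prob_mono_of_inter_support_subset (hP0 : 0 ≤ P) (hP : Summable P) {A B : Set Ω}
    (h : A ∩ support P ⊆ B) : prob P A ≤ prob P B := by
  refine Summable.tsum_le_tsum (fun ω => ?_) (hP.indicator A) (hP.indicator B)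
  by_cases hA : ω ∈ A
  · by_cases hω : P ω = 0
    · rw [Set.indicator_apply_eq_zero.2 fun _ => hω]
      exact Set.indicator_nonneg (fun x _ => hP0 x) ω
    · rw [Set.indicator_of_mem hA, Set.indicator_of_mem (h ⟨hA, hω⟩)]
  · rw [Set.indicator_of_notMem hA]
    exact Set.indicator_nonneg (fun x _ => hP0 x) ω

lemma prob_biUnion_le (hP0 : 0 ≤ P) (hP : Summable P) {ι : Type*} (s : Finset ι)
    (A : ι → Set Ω) : prob P (⋃ i ∈ s, A i) ≤ ∑ i ∈ s, prob P (A i) := by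
  unfold prob
  rw [← Summable.tsum_finsetSum fun i _ => hP.indicator (A i)]
  refine Summable.tsum_le_tsum (fun ω => ?_) (hP.indicator _)
    (summable_sum fun i _ => hP.indicator (A i))
  by_cases hω : ω ∈ ⋃ i ∈ s, A i
  · obtain ⟨i, hi, hωi⟩ := Set.mem_iUnion₂.mp hω
    rw [Set.indicator_of_mem hω, ← Set.indicator_of_mem hωi P]
    exact Finset.single_le_sum (fun j _ => Set.indicator_nonneg (fun x _ => hP0 x) ω) hi
  · rw [Set.indicator_of_notMem hω]
    exact Finset.sum_nonneg fun j _ => Set.indicator_nonneg (fun x _ => hP0 x) ω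

lemma prob_le_mul_prob_add_prob (hP0 : 0 ≤ P) (hP : Summable P) (hQ0 : 0 ≤ Q)
    (hQ : Summable Q) {c : ℝ} (hc : 0 ≤ c) {B : Set Ω} (hPQ : ∀ ω ∉ B, P ω ≤ c * Q ω)
    (W : Set Ω) : prob P W ≤ c * prob Q W + prob P B := by
  unfold prob
  rw [← tsum_mul_left, ← Summable.tsum_add ((hQ.indicator W).mul_left c) (hP.indicator B)]
  refine Summable.tsum_le_tsum (fun ω => ?_) (hP.indicator W)
    (((hQ.indicator W).mul_left c).add (hP.indicator B))
  have hQω : 0 ≤ Q ω := hQ0 ω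
  have hPω : 0 ≤ P ω := hP0 ω
  by_cases hW : ω ∈ W <;> by_cases hB : ω ∈ B <;>
    simp only [Set.indicator_of_mem, Set.indicator_of_notMem, hW, hB, not_false_eq_true,
      mul_zero, add_zero, zero_add, le_refl, hPω]
  · exact le_add_of_nonneg_left (mul_nonneg hc hQω)
  · exact hPQ ω hB

end Prob

section Product

variable {ι α : Type*} [Fintype ι]

lemma support_pi_prod_subset (f : ι → α → ℝ) :
    support (fun w : ι → α => ∏ i, f i (w i)) ⊆ Set.univ.pi fun i => support (f i) :=
  fun _ hw i _ => Finset.prod_ne_zero_iff.mp hw i (Finset.mem_univ i)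

lemma finite_support_pi_prod {f : ι → α → ℝ} (hf : ∀ i, (support (f i)).Finite) :
    (support fun w : ι → α => ∏ i, f i (w i)).Finite :=
  (Set.Finite.pi hf).subset (support_pi_prod_subset f)

lemma tsum_pi_prod [DecidableEq ι] {f : ι → α → ℝ} (hf : ∀ i, (support (f i)).Finite) :
    ∑' w : ι → α, ∏ i, f i (w i) = ∏ i, ∑' x, f i x := by
  set T : ι → Finset α := fun i => (hf i).toFinset
  have hT : ∀ i, ∀ x ∉ T i, f i x = 0 := fun i x hx => by simpa [T] using hx
  rw [tsum_eq_sum (s := Fintype.piFinset T), Finset.prod_congr rfl fun i _ => tsum_eq_sum (hT i),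
    Finset.prod_univ_sum]
  intro w hw
  obtain ⟨i, hi⟩ := not_forall.mp (mt Fintype.mem_piFinset.mpr hw)
  exact Finset.prod_eq_zero (Finset.mem_univ i) (hT i _ hi)

lemma prob_pi_prod [DecidableEq ι] {f : ι → α → ℝ} (hf : ∀ i, (support (f i)).Finite)
    (A : ι → Set α) :
    prob (fun w : ι → α => ∏ i, f i (w i)) (Set.univ.pi A) = ∏ i, prob (f i) (A i) := by
  unfold prob
  rw [← tsum_pi_prod (f := fun i => (A i).indicator (f i)) fun i => (hf i).subset (by simp)]
  congr 1
  funext w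
  by_cases hw : w ∈ Set.univ.pi A
  · rw [Set.indicator_of_mem hw]
    exact Finset.prod_congr rfl fun i _ => (Set.indicator_of_mem (hw i (Set.mem_univ i)) _).symm
  · obtain ⟨i, -, hi⟩ := not_forall₂.mp hw
    rw [Set.indicator_of_notMem hw]
    exact (Finset.prod_eq_zero (Finset.mem_univ i) (Set.indicator_of_notMem hi _)).symm

lemma prob_pi_prod_coord_le {f : ι → α → ℝ} (hf0 : ∀ i, 0 ≤ f i)
    (hf : ∀ i, (support (f i)).Finite) (hf1 : ∀ i, prob (f i) Set.univ ≤ 1) (i : ι)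
    (A : Set α) : prob (fun w : ι → α => ∏ j, f j (w j)) {w | w i ∈ A} ≤ prob (f i) A := by
  classical
  have hbox : {w : ι → α | w i ∈ A} = Set.univ.pi (update (fun _ => Set.univ) i A) := by
    ext w
    simp only [Set.mem_ofPred_eq, Set.mem_pi, Set.mem_univ, true_implies]
    refine ⟨fun hw j => ?_, fun hw => by simpa using hw i⟩
    rcases eq_or_ne j i with rfl | hj
    · simpa using hw
    · simp [hj]
  rw [hbox, prob_pi_prod hf, Fintype.prod_eq_mul_prod_compl i, update_self]
  refine mul_le_of_le_one_right (prob_nonneg (hf0 i) A) (Finset.prod_le_one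
    (fun j _ => prob_nonneg (hf0 j) _) fun j hj => ?_)
  rw [update_of_ne (Finset.mem_compl.mp hj ∘ Finset.mem_singleton.mpr)]
  exact hf1 j

end Product

section DLapTrunc

variable {a : ℝ} {τ : ℤ}

lemma dlapTrunc_nonneg (a : ℝ) (τ x : ℤ) : 0 ≤ dlapTrunc a τ x := by
  unfold dlapTrunc
  split_ifs
  · exact div_nonneg (exp_pos _).le (Finset.sum_nonneg fun _ _ => (exp_pos _).le)
  · exact le_rfl

lemma dlapTrunc_of_lt_abs {x : ℤ} (h : τ < |x|) : dlapTrunc a τ x = 0 :=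
  if_neg h.not_ge

lemma support_dlapTrunc_subset : support (dlapTrunc a τ) ⊆ Set.Icc (-τ) τ :=
  fun _ hx => abs_le.mp (not_lt.mp (mt dlapTrunc_of_lt_abs hx))

lemma finite_support_dlapTrunc : (support (dlapTrunc a τ)).Finite :=
  (Set.finite_Icc (-τ) τ).subset support_dlapTrunc_subset

lemma summable_dlapTrunc : Summable (dlapTrunc a τ) :=
  summable_of_hasFiniteSupport finite_support_dlapTrunc

lemma finite_support_dlapTrunc_sub (c : ℤ) :
    (support fun x => dlapTrunc a τ (x - c)).Finite :=
  finite_support_dlapTrunc.preimage (sub_left_injective (b := c)).injOn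

lemma dlapTrunc_neg (x : ℤ) : dlapTrunc a τ (-x) = dlapTrunc a τ x := by
  simp [dlapTrunc]

lemma dlapTrunc_eq_exp_mul {x y : ℤ} (hx : |x| ≤ τ) (hy : |y| ≤ τ) :
    dlapTrunc a τ x = exp (-a * (|x| - |y| : ℤ)) * dlapTrunc a τ y := by
  rw [dlapTrunc, dlapTrunc, if_pos hx, if_pos hy, ← mul_div_assoc, ← exp_add]
  push_cast
  ring_nf

lemma dlapTrunc_le_exp_mul (ha : 0 ≤ a) {y : ℤ} (hy : |y| ≤ τ) (x : ℤ) :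
    dlapTrunc a τ x ≤ exp (a * |x - y|) * dlapTrunc a τ y := by
  rcases le_or_gt |x| τ with hx | hx
  · rw [dlapTrunc_eq_exp_mul hx hy]
    refine mul_le_mul_of_nonneg_right (exp_le_exp.mpr ?_) (dlapTrunc_nonneg a τ y)
    have : |y| - |x| ≤ |x - y| := by simpa [abs_sub_comm] using abs_sub_abs_le_abs_sub y x
    have : ((|y| - |x| : ℤ) : ℝ) ≤ (|x - y| : ℤ) := by exact_mod_cast this
    push_cast at this ⊢
    nlinarith
  · rw [dlapTrunc_of_lt_abs hx]
    exact mul_nonneg (exp_pos _).le (dlapTrunc_nonneg a τ y)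

lemma dlapTrunc_le_exp_mul_dlapTrunc_sub {t x : ℤ} (ht : 0 ≤ t) (htx : t < x) :
    dlapTrunc a τ x ≤ exp (-a * t) * dlapTrunc a τ (x - t) := by
  rcases le_or_gt |x| τ with hx | hx
  · rw [dlapTrunc_eq_exp_mul hx (y := x - t) (by rw [abs_le] at hx ⊢; omega),
      abs_of_pos (by omega : 0 < x), abs_of_pos (by omega : 0 < x - t), sub_sub_cancel]
  · rw [dlapTrunc_of_lt_abs hx]
    exact mul_nonneg (exp_pos _).le (dlapTrunc_nonneg a τ _)

lemma prob_dlapTrunc_univ_le_one : prob (dlapTrunc a τ) Set.univ ≤ 1 := by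
  rw [prob_univ, tsum_eq_sum (s := Finset.Icc (-τ) τ) fun x hx => dlapTrunc_of_lt_abs
    (not_le.mp fun h => hx (Finset.mem_Icc.mpr (abs_le.mp h)))]
  unfold dlapTrunc
  rw [Finset.sum_congr rfl fun x hx => if_pos (abs_le.mpr (Finset.mem_Icc.mp hx)),
    ← Finset.sum_div]
  exact div_self_le_one _

lemma prob_dlapTrunc_sub (c : ℤ) (A : Set ℤ) :
    prob (fun x => dlapTrunc a τ (x - c)) A = prob (dlapTrunc a τ) {y | y + c ∈ A} :=
  prob_comp_equiv (Equiv.subRight c) _ A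

lemma prob_dlapTrunc_Ioi_le (ha : 0 ≤ a) (t : ℤ) :
    prob (dlapTrunc a τ) (Set.Ioi t) ≤ exp (-a * t) := by
  rcases lt_or_ge t 0 with ht | ht
  · calc prob (dlapTrunc a τ) (Set.Ioi t) ≤ prob (dlapTrunc a τ) Set.univ :=
          prob_mono_of_inter_support_subset (dlapTrunc_nonneg a τ) summable_dlapTrunc
            (Set.subset_univ _)
      _ ≤ 1 := prob_dlapTrunc_univ_le_one
      _ ≤ exp (-a * t) := one_le_exp (mul_nonneg_of_nonpos_of_nonpos (neg_nonpos.mpr ha)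
          (by exact_mod_cast ht.le))
  · calc prob (dlapTrunc a τ) (Set.Ioi t) ≤ ∑' x, exp (-a * t) * dlapTrunc a τ (x - t) := by
          refine Summable.tsum_le_tsum (fun x => ?_) (summable_dlapTrunc.indicator _)
            ((summable_of_hasFiniteSupport (finite_support_dlapTrunc_sub t)).mul_left _)
          by_cases hx : x ∈ Set.Ioi t
          · rw [Set.indicator_of_mem hx]
            exact dlapTrunc_le_exp_mul_dlapTrunc_sub ht hx
          · rw [Set.indicator_of_notMem hx]
            exact mul_nonneg (exp_pos _).le (dlapTrunc_nonneg a τ _)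
      _ = exp (-a * t) * prob (dlapTrunc a τ) Set.univ := by
          rw [tsum_mul_left, ← prob_univ, prob_dlapTrunc_sub]
          simp
      _ ≤ exp (-a * t) := mul_le_of_le_one_right (exp_pos _).le prob_dlapTrunc_univ_le_one

lemma prob_dlapTrunc_lt_abs_add_le (ha : 0 ≤ a) (c : ℤ) :
    prob (dlapTrunc a τ) {y | τ < |y + c|} ≤ exp (-a * (τ - |c| : ℤ)) := by
  wlog hc : 0 ≤ c generalizing c
  · have hsymm := prob_comp_equiv (Equiv.neg ℤ) (dlapTrunc a τ) {y | τ < |y + -c|}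
    simp only [Equiv.neg_apply, dlapTrunc_neg] at hsymm
    have hset : {y | τ < |y + c|} = (Equiv.neg ℤ).symm ⁻¹' {y | τ < |y + -c|} := by
      ext y
      simp only [Set.mem_preimage, Equiv.neg_symm, Equiv.neg_apply, Set.mem_ofPred_eq]
      rw [← neg_add, abs_neg]
    rw [hset, ← hsymm, ← abs_neg c]
    exact this (-c) (by omega)
  rw [abs_of_nonneg hc]
  refine le_trans (prob_mono_of_inter_support_subset (dlapTrunc_nonneg a τ) summable_dlapTrunc
    fun y ⟨hy, hyτ⟩ => ?_) (prob_dlapTrunc_Ioi_le ha (τ - c))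
  have := Set.mem_Icc.mp (support_dlapTrunc_subset hyτ)
  simp only [Set.mem_ofPred_eq, Set.mem_Ioi] at hy ⊢
  rw [lt_abs] at hy
  omega

end DLapTrunc

section Mechanism

variable {ι : Type*} [Fintype ι] {a : ℝ} {τ : ℤ}

lemma prod_dlapTrunc_sub_nonneg (c : ι → ℤ) :
    0 ≤ fun w : ι → ℤ => ∏ i, dlapTrunc a τ (w i - c i) :=
  fun _ => Finset.prod_nonneg fun _ _ => dlapTrunc_nonneg a τ _

lemma summable_prod_dlapTrunc_sub (c : ι → ℤ) :
    Summable fun w : ι → ℤ => ∏ i, dlapTrunc a τ (w i - c i) :=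
  summable_of_hasFiniteSupport (finite_support_pi_prod fun i => finite_support_dlapTrunc_sub (c i))

lemma prod_dlapTrunc_le (ha : 0 ≤ a) (u v w : ι → ℤ) (hw : ∀ i, |w i - v i| ≤ τ) :
    ∏ i, dlapTrunc a τ (w i - u i)
      ≤ exp (a * (∑ i, |u i - v i| : ℤ)) * ∏ i, dlapTrunc a τ (w i - v i) := by
  calc ∏ i, dlapTrunc a τ (w i - u i)
      ≤ ∏ i, (exp (a * |u i - v i|) * dlapTrunc a τ (w i - v i)) := by
        refine Finset.prod_le_prod (fun i _ => dlapTrunc_nonneg a τ _) fun i _ => ?_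
        simpa [abs_sub_comm] using dlapTrunc_le_exp_mul ha (hw i) (w i - u i)
    _ = exp (a * (∑ i, |u i - v i| : ℤ)) * ∏ i, dlapTrunc a τ (w i - v i) := by
        rw [Finset.prod_mul_distrib, ← exp_sum, ← Finset.mul_sum]
        push_cast
        rfl

lemma prob_prod_dlapTrunc_coord_tail_le (ha : 0 ≤ a) (u v : ι → ℤ) (i : ι) :
    prob (fun w : ι → ℤ => ∏ j, dlapTrunc a τ (w j - u j)) {w | τ < |w i - v i|}
      ≤ exp (-a * (τ - |u i - v i| : ℤ)) := by
  calc _ ≤ prob (fun x => dlapTrunc a τ (x - u i)) {x | τ < |x - v i|} :=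
        prob_pi_prod_coord_le (f := fun j x => dlapTrunc a τ (x - u j))
          (fun j x => dlapTrunc_nonneg a τ _) (fun j => finite_support_dlapTrunc_sub (u j))
          (fun j => by simpa [prob_dlapTrunc_sub] using prob_dlapTrunc_univ_le_one) i _
    _ = prob (dlapTrunc a τ) {y | τ < |y + (u i - v i)|} := by
        rw [prob_dlapTrunc_sub]
        congr 1
        ext y
        simp [add_sub_assoc]
    _ ≤ _ := prob_dlapTrunc_lt_abs_add_le ha _

lemma prob_prod_dlapTrunc_exists_lt_abs_le (ha : 0 ≤ a) (u v : ι → ℤ) :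
    prob (fun w : ι → ℤ => ∏ j, dlapTrunc a τ (w j - u j)) {w | ∃ i, τ < |w i - v i|}
      ≤ ∑ i ∈ Finset.univ.filter (fun i => u i ≠ v i), exp (-a * (τ - |u i - v i| : ℤ)) := by
  classical
  set P := fun w : ι → ℤ => ∏ j, dlapTrunc a τ (w j - u j)
  have hP0 : 0 ≤ P := prod_dlapTrunc_sub_nonneg u
  have hP : Summable P := summable_prod_dlapTrunc_sub u
  calc prob P {w | ∃ i, τ < |w i - v i|}
      ≤ prob P (⋃ i ∈ Finset.univ.filter (fun i => u i ≠ v i), {w | τ < |w i - v i|}) := by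
        refine prob_mono_of_inter_support_subset hP0 hP fun w ⟨⟨i, hi⟩, hw⟩ => ?_
        -- a coordinate with `u i = v i` cannot leave the support of `P`
        have hwi : |w i - u i| ≤ τ :=
          not_lt.mp (mt dlapTrunc_of_lt_abs (support_pi_prod_subset _ hw i (Set.mem_univ i)))
        refine Set.mem_biUnion (x := i) ?_ hi
        simp only [ne_eq, Finset.coe_filter, Finset.mem_univ, true_and, Set.mem_ofPred_eq]
        intro hiuv
        rw [hiuv] at hwi
        exact hwi.not_gt hi
    _ ≤ _ := (prob_biUnion_le hP0 hP _ _).trans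
        (Finset.sum_le_sum fun i _ => prob_prod_dlapTrunc_coord_tail_le ha u v i)

lemma prob_prod_dlapTrunc_le (ha : 0 ≤ a) (u v : ι → ℤ) {D : ℤ} (hD : ∑ i, |u i - v i| ≤ D)
    (W : Set (ι → ℤ)) :
    prob (fun w : ι → ℤ => ∏ i, dlapTrunc a τ (w i - u i)) W
      ≤ exp (a * D) * prob (fun w : ι → ℤ => ∏ i, dlapTrunc a τ (w i - v i)) W
        + (Finset.univ.filter (fun i => u i ≠ v i)).card * exp (-a * (τ - D : ℤ)) := by
  have hcoord (i : ι) : |u i - v i| ≤ D :=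
    (Finset.single_le_sum (fun j _ => abs_nonneg (u j - v j)) (Finset.mem_univ i)).trans hD
  refine (prob_le_mul_prob_add_prob (prod_dlapTrunc_sub_nonneg u) (summable_prod_dlapTrunc_sub u)
    (prod_dlapTrunc_sub_nonneg v) (summable_prod_dlapTrunc_sub v) (exp_pos _).le
    (B := {w | ∃ i, τ < |w i - v i|}) (fun w hw => ?_) W).trans
      (add_le_add le_rfl ((prob_prod_dlapTrunc_exists_lt_abs_le ha u v).trans ?_))
  · refine (prod_dlapTrunc_le ha u v w (by simpa using hw)).trans
      (mul_le_mul_of_nonneg_right (exp_le_exp.mpr ?_) (prod_dlapTrunc_sub_nonneg v w))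
    exact mul_le_mul_of_nonneg_left (by exact_mod_cast hD) ha
  · rw [← nsmul_eq_mul]
    refine Finset.sum_le_card_nsmul _ _ _ fun i _ => exp_le_exp.mpr ?_
    have : ((|u i - v i| : ℤ) : ℝ) ≤ D := by exact_mod_cast hcoord i
    push_cast at this ⊢
    nlinarith

end Mechanism

lemma card_mul_exp_le {ε δ : ℝ} (hε : 0 < ε) (hδ : 0 < δ) {Δ : ℕ} (hΔ : 0 < Δ) {k s : ℕ}
    (hks : k ≤ s) {τ : ℤ} (hτ : (Δ : ℝ) * (1 + log (s / δ) / ε) ≤ τ) :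
    k * exp (-(ε / Δ) * (τ - Δ : ℤ)) ≤ δ := by
  rcases Nat.eq_zero_or_pos k with rfl | hk
  · simpa using hδ.le
  have hs : (0 : ℝ) < s := by exact_mod_cast hk.trans_le hks
  have hΔ' : (0 : ℝ) < Δ := by exact_mod_cast hΔ
  have hτ' : ε + log (s / δ) ≤ ε / Δ * τ :=
    calc ε + log (s / δ) = ε / Δ * (Δ * (1 + log (s / δ) / ε)) := by field_simp
      _ ≤ ε / Δ * τ := mul_le_mul_of_nonneg_left hτ (by positivity)
  have hexp : exp (-(ε / Δ) * (τ - Δ : ℤ)) ≤ δ / s := by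
    rw [← exp_log (div_pos hδ hs), exp_le_exp, log_div hδ.ne' hs.ne']
    rw [log_div hs.ne' hδ.ne'] at hτ'
    have hεΔ : ε / Δ * Δ = ε := div_mul_cancel₀ ε hΔ'.ne'
    push_cast
    linarith
  calc k * exp (-(ε / Δ) * (τ - Δ : ℤ)) ≤ s * (δ / s) :=
        mul_le_mul (by exact_mod_cast hks) hexp (exp_pos _).le hs.le
    _ = δ := mul_div_cancel₀ δ hs.ne'

theorem truncated_dlap_mechanism_approx_dp_general (d : ℕ) (ε δ : ℝ) (hε : 0 < ε)
    (hδ0 : 0 < δ) (Δ : ℕ) (hΔ : 0 < Δ) (s : ℕ)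
    (u v : Fin d → ℤ) (h1 : (∑ i, |u i - v i|) ≤ (Δ : ℤ))
    (hs : (Finset.univ.filter (fun i => u i ≠ v i)).card ≤ s)
    (τ : ℤ) (hτ : (Δ : ℝ) * (1 + Real.log ((s : ℝ) / δ) / ε) ≤ (τ : ℝ)) :
    Indist ε δ
      (fun w : Fin d → ℤ => ∏ i, dlapTrunc (ε / Δ) τ (w i - u i))
      (fun w : Fin d → ℤ => ∏ i, dlapTrunc (ε / Δ) τ (w i - v i)) := by
  have ha : 0 ≤ ε / Δ := by positivity
  have hεΔ : ε / Δ * ((Δ : ℤ) : ℝ) = ε := by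
    push_cast
    exact div_mul_cancel₀ ε (by exact_mod_cast hΔ.ne')
  have h1' : ∑ i, |v i - u i| ≤ (Δ : ℤ) := by simpa only [abs_sub_comm] using h1
  have hs' : (Finset.univ.filter (fun i => v i ≠ u i)).card ≤ s := by
    simpa only [ne_comm] using hs
  intro W
  constructor
  · refine (prob_prod_dlapTrunc_le ha u v h1 W).trans ?_
    rw [hεΔ]
    gcongr
    exact card_mul_exp_le hε hδ0 hΔ hs hτ
  · refine (prob_prod_dlapTrunc_le ha v u h1' W).trans ?_
    rw [hεΔ]
    gcongr
    exact card_mul_exp_le hε hδ0 hΔ hs' hτ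

theorem truncated_dlap_mechanism_approx_dp (d : ℕ) (ε δ : ℝ) (hε : 0 < ε)
    (hδ0 : 0 < δ) (hδ1 : δ ≤ 1) (Δ : ℕ) (hΔ : 0 < Δ) (s : ℕ)
    (u v : Fin d → ℤ) (h1 : (∑ i, |u i - v i|) ≤ (Δ : ℤ))
    (hs : (Finset.univ.filter (fun i => u i ≠ v i)).card ≤ s)
    (τ : ℤ) (hτ : (Δ : ℝ) * (1 + Real.log ((s : ℝ) / δ) / ε) ≤ (τ : ℝ)) :
    Indist ε δ
      (fun w : Fin d → ℤ => ∏ i, dlapTrunc (ε / Δ) τ (w i - u i))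
      (fun w : Fin d → ℤ => ∏ i, dlapTrunc (ε / Δ) τ (w i - v i)) :=
  truncated_dlap_mechanism_approx_dp_general d ε δ hε hδ0 Δ hΔ s u v h1 hs τ hτ
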